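/- arXiv:1803.01575 — 4 statements merged into one kernel-verified Lean document; each statement's English description precedes it below -/
import Mathlib

section
/- Let K ∈ ℝ^{m×m} and G ∈ ℝ^{q×q} be symmetric positive definite, Y ∈ ℝ^{m×q}, λ_u, λ_v > 0. The function J(F) = tr((F − Y)ᵀ(F − Y)) + λ_u λ_v tr(Fᵀ K⁻¹ F G⁻¹) + λ_u tr(Fᵀ K⁻¹ F) + λ_v tr(Fᵀ F G⁻¹) over F ∈ ℝ^{m×q} has unique minimizer F = K(K + λ_u I)⁻¹ Y (G + λ_v I)⁻¹ G. -/
open Matrix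

lemma smulPosDef {n : ℕ} {A : Matrix (Fin n) (Fin n) ℝ} (hA : A.PosDef) {c : ℝ} (hc : 0 < c) :
    (c • A).PosDef := by
  refine Matrix.PosDef.of_dotProduct_mulVec_pos ?_ (fun x hx => ?_)
  · unfold Matrix.IsHermitian
    rw [conjTranspose_smul, hA.1.eq]
    simp
  · rw [smul_mulVec, dotProduct_smul, smul_eq_mul]
    exact mul_pos hc (hA.dotProduct_mulVec_pos hx)

lemma tracePosDef {n k : ℕ} {M : Matrix (Fin n) (Fin n) ℝ} (hM : M.PosDef)
    {E : Matrix (Fin n) (Fin k) ℝ} (hE : E ≠ 0) : 0 < (Eᵀ * M * E).trace := by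
  have hcol : ∀ j, (Eᵀ * M * E) j j = star (fun i => E i j) ⬝ᵥ M *ᵥ (fun i => E i j) := by
    intro j
    simp only [Matrix.mul_apply, Matrix.mulVec, dotProduct, transpose_apply, Finset.sum_mul,
      Finset.mul_sum, star_trivial]
    rw [Finset.sum_comm]
    apply Finset.sum_congr rfl; intro i _
    apply Finset.sum_congr rfl; intro l _
    ring
  obtain ⟨i0, j0, hij⟩ : ∃ i j, E i j ≠ 0 := by
    by_contra h; push_neg at h
    exact hE (by ext i j; simp [h])
  rw [Matrix.trace]
  apply Finset.sum_pos'
  · intro j _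
    rw [Matrix.diag_apply, hcol j]
    exact hM.posSemidef.dotProduct_mulVec_nonneg _
  · refine ⟨j0, Finset.mem_univ _, ?_⟩
    rw [Matrix.diag_apply, hcol j0]
    exact hM.dotProduct_mulVec_pos (by intro h; exact hij (congrFun h i0))

open scoped MatrixOrder in
lemma sqrtExists {q : ℕ} {N : Matrix (Fin q) (Fin q) ℝ} (h : N.PosSemidef) :
    ∃ S : Matrix (Fin q) (Fin q) ℝ, S * S = N ∧ Sᵀ = S := by
  have h0 : 0 ≤ N := Matrix.nonneg_iff_posSemidef.mpr h
  refine ⟨CFC.sqrt N, CFC.sqrt_mul_sqrt_self N h0, ?_⟩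
  rw [← conjTranspose_eq_transpose_of_trivial]
  exact (Matrix.nonneg_iff_posSemidef.mp (CFC.sqrt_nonneg N)).1

/-- Two-step KRR as value-regularized empirical risk minimization: the objective
`J(F) = tr((F−Y)ᵀ(F−Y)) + λᵤλᵥ tr(Fᵀ K⁻¹ F G⁻¹) + λᵤ tr(Fᵀ K⁻¹ F) + λᵥ tr(Fᵀ F G⁻¹)`
has unique minimizer `F = K (K + λᵤ I)⁻¹ Y (G + λᵥ I)⁻¹ G`. -/
theorem stmt_3 (m q : ℕ)
    (K : Matrix (Fin m) (Fin m) ℝ) (G : Matrix (Fin q) (Fin q) ℝ)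
    (hK : K.PosDef) (hG : G.PosDef)
    (Y : Matrix (Fin m) (Fin q) ℝ) (lu lv : ℝ) (hlu : 0 < lu) (hlv : 0 < lv) :
    let J : Matrix (Fin m) (Fin q) ℝ → ℝ := fun F =>
      ((F - Y)ᵀ * (F - Y)).trace + lu * lv * (Fᵀ * K⁻¹ * F * G⁻¹).trace +
        lu * (Fᵀ * K⁻¹ * F).trace + lv * (Fᵀ * F * G⁻¹).trace
    let Fstar : Matrix (Fin m) (Fin q) ℝ :=
      K * (K + lu • (1 : Matrix (Fin m) (Fin m) ℝ))⁻¹ * Y *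
        (G + lv • (1 : Matrix (Fin q) (Fin q) ℝ))⁻¹ * G
    ∀ F : Matrix (Fin m) (Fin q) ℝ, F ≠ Fstar → J Fstar < J F := by
  intro J Fstar F hF
  set M : Matrix (Fin m) (Fin m) ℝ := 1 + lu • K⁻¹ with hMdef
  set N : Matrix (Fin q) (Fin q) ℝ := 1 + lv • G⁻¹ with hNdef
  have hlu1 : ((lu • (1 : Matrix (Fin m) (Fin m) ℝ))).PosDef := smulPosDef Matrix.PosDef.one hlu
  have hlv1 : ((lv • (1 : Matrix (Fin q) (Fin q) ℝ))).PosDef := smulPosDef Matrix.PosDef.one hlv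
  have hKu : (K + lu • (1 : Matrix (Fin m) (Fin m) ℝ)).PosDef := hK.add hlu1
  have hGu : (G + lv • (1 : Matrix (Fin q) (Fin q) ℝ)).PosDef := hG.add hlv1
  have hKdet : IsUnit K.det := (Matrix.isUnit_iff_isUnit_det _).1 hK.isUnit
  have hGdet : IsUnit G.det := (Matrix.isUnit_iff_isUnit_det _).1 hG.isUnit
  have hKudet : IsUnit (K + lu • (1 : Matrix (Fin m) (Fin m) ℝ)).det :=
    (Matrix.isUnit_iff_isUnit_det _).1 hKu.isUnit
  have hGudet : IsUnit (G + lv • (1 : Matrix (Fin q) (Fin q) ℝ)).det :=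
    (Matrix.isUnit_iff_isUnit_det _).1 hGu.isUnit
  -- Hermitian-ness as transpose
  have hMt : Mᵀ = M := by
    rw [hMdef, transpose_add, transpose_one, transpose_smul, transpose_nonsing_inv,
      ← conjTranspose_eq_transpose_of_trivial, hK.1.eq]
  have hNt : Nᵀ = N := by
    rw [hNdef, transpose_add, transpose_one, transpose_smul, transpose_nonsing_inv,
      ← conjTranspose_eq_transpose_of_trivial, hG.1.eq]
  -- the normal equation  M * Fstar * N = Y
  have hMK : M * K = K + lu • (1 : Matrix (Fin m) (Fin m) ℝ) := by
    rw [hMdef, Matrix.add_mul, Matrix.one_mul, Matrix.smul_mul, Matrix.nonsing_inv_mul _ hKdet]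
  have hGN : G * N = G + lv • (1 : Matrix (Fin q) (Fin q) ℝ) := by
    rw [hNdef, Matrix.mul_add, Matrix.mul_one, Matrix.mul_smul, Matrix.mul_nonsing_inv _ hGdet]
  have hY : M * Fstar * N = Y := by
    calc M * Fstar * N
        = (M * K) * (K + lu • 1)⁻¹ * Y * (G + lv • 1)⁻¹ * (G * N) := by
          show M * (K * (K + lu • (1 : Matrix (Fin m) (Fin m) ℝ))⁻¹ * Y *
            (G + lv • (1 : Matrix (Fin q) (Fin q) ℝ))⁻¹ * G) * N = _
          simp only [Matrix.mul_assoc]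
      _ = Y := by
          rw [hMK, hGN, Matrix.mul_nonsing_inv _ hKudet, Matrix.one_mul,
            Matrix.mul_assoc, Matrix.nonsing_inv_mul _ hGudet, Matrix.mul_one]
  have hY' : M * (Fstar * N) = Y := by rw [← Matrix.mul_assoc]; exact hY
  have hYF : ∀ A : Matrix (Fin m) (Fin q) ℝ, (Yᵀ * A).trace = (Aᵀ * Y).trace := by
    intro A
    rw [← Matrix.trace_transpose (Yᵀ * A), transpose_mul, transpose_transpose]
  -- quadratic-form expansion of J
  have expand : ∀ A : Matrix (Fin m) (Fin q) ℝ,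
      J A = (Aᵀ * M * A * N).trace - 2 * (Aᵀ * Y).trace + (Yᵀ * Y).trace := by
    intro A
    show ((A - Y)ᵀ * (A - Y)).trace + lu * lv * (Aᵀ * K⁻¹ * A * G⁻¹).trace +
        lu * (Aᵀ * K⁻¹ * A).trace + lv * (Aᵀ * A * G⁻¹).trace = _
    simp only [hMdef, hNdef, transpose_sub, Matrix.sub_mul, Matrix.mul_sub, Matrix.mul_add,
      Matrix.add_mul, Matrix.smul_mul, Matrix.mul_smul, Matrix.mul_one, Matrix.one_mul,
      trace_add, trace_sub, trace_smul, smul_eq_mul, smul_smul]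
    rw [hYF A]; ring
  -- cross terms
  have cross1 : ∀ A : Matrix (Fin m) (Fin q) ℝ,
      (Aᵀ * M * Fstar * N).trace = (Aᵀ * Y).trace := by
    intro A
    rw [Matrix.mul_assoc (Aᵀ * M), Matrix.mul_assoc Aᵀ, hY']
  have cross2 : (Fstarᵀ * M * F * N).trace = (Fᵀ * Y).trace := by
    rw [Matrix.trace_mul_comm]
    have h2 : N * (Fstarᵀ * M * F) = Yᵀ * F := by
      have : (M * Fstar * N)ᵀ * F = N * (Fstarᵀ * M * F) := by
        rw [transpose_mul, transpose_mul, hMt, hNt]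
        simp only [Matrix.mul_assoc]
      rw [← this, hY]
    rw [h2, hYF]
  -- difference identity
  have diff : J F - J Fstar = ((F - Fstar)ᵀ * M * (F - Fstar) * N).trace := by
    rw [expand F, expand Fstar]
    simp only [transpose_sub, Matrix.sub_mul, Matrix.mul_sub, trace_sub]
    rw [cross1 F, cross1 Fstar, cross2]
    ring
  -- positivity
  have hMpd : M.PosDef := Matrix.PosDef.one.add (smulPosDef hK.inv hlu)
  have hNpd : N.PosDef := Matrix.PosDef.one.add (smulPosDef hG.inv hlv)
  obtain ⟨S, hSS, hSt⟩ := sqrtExists hNpd.posSemidef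
  have hSdet : IsUnit S.det := by
    have h : S.det * S.det = N.det := by rw [← det_mul, hSS]
    have hN : IsUnit N.det := (Matrix.isUnit_iff_isUnit_det _).1 hNpd.isUnit
    exact isUnit_of_mul_isUnit_left (h ▸ hN)
  have hD : F - Fstar ≠ 0 := sub_ne_zero_of_ne hF
  have hE : (F - Fstar) * S ≠ 0 := by
    intro h
    apply hD
    have := Matrix.mul_nonsing_inv_cancel_right (A := S) (F - Fstar) hSdet
    rw [h, Matrix.zero_mul] at this
    exact this.symm
  have htr : ((F - Fstar)ᵀ * M * (F - Fstar) * N).trace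
      = (((F - Fstar) * S)ᵀ * M * ((F - Fstar) * S)).trace := by
    rw [← hSS, ← Matrix.mul_assoc, Matrix.trace_mul_comm]
    simp only [transpose_mul, hSt, Matrix.mul_assoc]
  have hpos : 0 < ((F - Fstar)ᵀ * M * (F - Fstar) * N).trace := by
    rw [htr]; exact tracePosDef hMpd hE
  linarith [diff, hpos]
end

section
/- Let 𝒥_n be the n×n all-ones matrix. If a₁ ≠ 0, a₁ + a₂m ≠ 0, a₁ + a₃q ≠ 0, and a₁ + a₂m + a₃q + a₄mq ≠ 0, then A = a₁ I_m⊗I_q + a₂ 𝒥_m⊗I_q + a₃ I_m⊗𝒥_q + a₄ 𝒥_m⊗𝒥_q is invertible and its inverse also lies in the span of {I_m⊗I_q, 𝒥_m⊗I_q, I_m⊗𝒥_q, 𝒥_m⊗𝒥_q}, with first coefficient d₁ = 1/a₁, second coefficient d₂ = −a₂/(a₁(a₁+a₂m)), third coefficient d₃ = −a₃/(a₁(a₁+a₃q)). -/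
/-!
If `P² = s P` and `Q² = t Q`, the matrices `1 ⊗ 1`, `P ⊗ 1`, `1 ⊗ Q`, `P ⊗ Q` span a
commutative algebra whose multiplication has explicit structure constants. A right inverse
inside the span is then found by solving a triangular linear system for its coefficients;
the pivots are the joint eigenvalues `a`, `a + b s`, `a + c t`, `a + b s + c t + d s t`,
which is why exactly these must be nonzero.
-/

open Matrix
open scoped Kronecker

def onesMat (n : ℕ) : Matrix (Fin n) (Fin n) ℝ := Matrix.of fun _ _ => 1

theorem onesMat_mul_self (n : ℕ) : onesMat n * onesMat n = (n : ℝ) • onesMat n := by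
  ext i j
  simp [onesMat, Matrix.mul_apply]

section KroneckerSpan

variable {R ι κ : Type*} [DecidableEq ι] [DecidableEq κ]

def kroneckerSpan [CommRing R] (P : Matrix ι ι R) (Q : Matrix κ κ R) (a b c d : R) :
    Matrix (ι × κ) (ι × κ) R :=
  a • ((1 : Matrix ι ι R) ⊗ₖ (1 : Matrix κ κ R)) + b • (P ⊗ₖ (1 : Matrix κ κ R)) +
    c • ((1 : Matrix ι ι R) ⊗ₖ Q) + d • (P ⊗ₖ Q)

theorem kroneckerSpan_one_zero_zero_zero [CommRing R] (P : Matrix ι ι R) (Q : Matrix κ κ R) :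
    kroneckerSpan P Q 1 0 0 0 = 1 := by
  simp [kroneckerSpan]

variable [Fintype ι] [Fintype κ]

theorem kroneckerSpan_mul [CommRing R] {P : Matrix ι ι R} {Q : Matrix κ κ R} {s t : R}
    (hP : P * P = s • P) (hQ : Q * Q = t • Q) (a b c d a' b' c' d' : R) :
    kroneckerSpan P Q a b c d * kroneckerSpan P Q a' b' c' d' =
      kroneckerSpan P Q (a * a') (a * b' + b * a' + s * b * b') (a * c' + c * a' + t * c * c')
        (a * d' + d * a' + b * c' + c * b' + s * (b * d' + d * b') + t * (c * d' + d * c') +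
          s * t * d * d') := by
  simp only [kroneckerSpan, add_mul, mul_add, smul_mul_assoc, Matrix.mul_smul,
    ← Matrix.mul_kronecker_mul, one_mul, mul_one, hP, hQ, Matrix.smul_kronecker,
    Matrix.kronecker_smul, smul_smul]
  match_scalars <;> ring

theorem kroneckerSpan_mul_eq_one [Field R] {P : Matrix ι ι R} {Q : Matrix κ κ R} {s t : R}
    (hP : P * P = s • P) (hQ : Q * Q = t • Q) {a b c d : R} (ha : a ≠ 0)
    (hb : a + b * s ≠ 0) (hc : a + c * t ≠ 0) (hd : a + b * s + c * t + d * s * t ≠ 0) :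
    ∃ d' : R, kroneckerSpan P Q a b c d *
      kroneckerSpan P Q (1 / a) (-b / (a * (a + b * s))) (-c / (a * (a + c * t))) d' = 1 := by
  -- the solution of the last equation of the triangular system, cleared of `b'` and `c'`
  refine ⟨(b * c * (2 * a + b * s + c * t + d * s * t) - a ^ 2 * d) /
    (a * (a + b * s) * (a + c * t) * (a + b * s + c * t + d * s * t)), ?_⟩
  rw [kroneckerSpan_mul hP hQ, ← kroneckerSpan_one_zero_zero_zero P Q]
  -- `field_simp` recognises the last pivot only in its own normal form
  have hd' : a + b * s + c * t + s * t * d ≠ 0 := by convert hd using 2; ring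
  congr 1 <;> field_simp <;> ring

end KroneckerSpan

/-- Invertibility inside the span of `{I⊗I, 𝒥⊗I, I⊗𝒥, 𝒥⊗𝒥}`: under the four scalar
conditions the matrix is invertible, and its inverse lies in the same span with the
stated first three coefficients. -/
theorem stmt_9 (m q : ℕ) (a1 a2 a3 a4 : ℝ)
    (h1 : a1 ≠ 0) (h2 : a1 + a2 * m ≠ 0) (h3 : a1 + a3 * q ≠ 0)
    (h4 : a1 + a2 * m + a3 * q + a4 * m * q ≠ 0) :
    let A : Matrix (Fin m × Fin q) (Fin m × Fin q) ℝ :=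
      a1 • ((1 : Matrix (Fin m) (Fin m) ℝ) ⊗ₖ (1 : Matrix (Fin q) (Fin q) ℝ)) +
        a2 • (onesMat m ⊗ₖ (1 : Matrix (Fin q) (Fin q) ℝ)) +
        a3 • ((1 : Matrix (Fin m) (Fin m) ℝ) ⊗ₖ onesMat q) +
        a4 • (onesMat m ⊗ₖ onesMat q)
    IsUnit A.det ∧
      ∃ d4 : ℝ, A⁻¹ =
        (1 / a1) • ((1 : Matrix (Fin m) (Fin m) ℝ) ⊗ₖ (1 : Matrix (Fin q) (Fin q) ℝ)) +
          (-a2 / (a1 * (a1 + a2 * m))) • (onesMat m ⊗ₖ (1 : Matrix (Fin q) (Fin q) ℝ)) +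
          (-a3 / (a1 * (a1 + a3 * q))) • ((1 : Matrix (Fin m) (Fin m) ℝ) ⊗ₖ onesMat q) +
          d4 • (onesMat m ⊗ₖ onesMat q) := by
  obtain ⟨d4, hAB⟩ :=
    kroneckerSpan_mul_eq_one (onesMat_mul_self m) (onesMat_mul_self q) h1 h2 h3 h4
  exact ⟨isUnit_det_of_right_inverse hAB, d4, inv_eq_right_inv hAB⟩
end

section
/- Fix constants a, b ≥ 1 and ν ∈ (0, 1/2]. For all ς > 0, λ > 0, and all factorizations ς = σs with 0 < σ, s ≤ a√ς and λ = λ_u λ_v with 0 < λ_u, λ_v ≤ b√λ, one has (ς^ν/λ^ν)·(1 − ς/(ς + λ_v σ + λ_u s + λ)) ≤ 2ab. -/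
set_option maxHeartbeats 1000000


/-- Qualification bound for the two-step KRR spectral filter: for all factorizations
`ς = σ s` and `λ = λᵤ λᵥ` bounded as stated, and all `ν ∈ (0, 1/2]`,
`(ς^ν / λ^ν) (1 − ς/(ς + λᵥσ + λᵤs + λ)) ≤ 2ab`. -/
theorem stmt_12 (a b : ℝ) (ha : 1 ≤ a) (hb : 1 ≤ b)
    (nu : ℝ) (hnu0 : 0 < nu) (hnu : nu ≤ 1 / 2)
    (vs lam sigma s lu lv : ℝ)
    (hvs : 0 < vs) (hlam : 0 < lam)
    (hfac : vs = sigma * s) (hs0 : 0 < sigma) (hs1 : sigma ≤ a * Real.sqrt vs)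
    (ht0 : 0 < s) (ht1 : s ≤ a * Real.sqrt vs)
    (hlfac : lam = lu * lv) (hlu0 : 0 < lu) (hlu1 : lu ≤ b * Real.sqrt lam)
    (hlv0 : 0 < lv) (hlv1 : lv ≤ b * Real.sqrt lam) :
    (vs ^ nu / lam ^ nu) * (1 - vs / (vs + lv * sigma + lu * s + lam)) ≤ 2 * a * b := by
  set u := Real.sqrt vs with hu
  set l := Real.sqrt lam with hl
  have hu0 : 0 < u := Real.sqrt_pos.mpr hvs
  have hl0 : 0 < l := Real.sqrt_pos.mpr hlam
  have hu2 : u ^ 2 = vs := Real.sq_sqrt hvs.le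
  have hl2 : l ^ 2 = lam := Real.sq_sqrt hlam.le
  set D := lv * sigma + lu * s + lam with hD
  have hD0 : 0 < D := by positivity
  have hDE : D ≤ 2 * a * b * l * u + lam := by
    have h1 : lv * sigma ≤ (b * l) * (a * u) :=
      mul_le_mul hlv1 hs1 hs0.le (by positivity)
    have h2 : lu * s ≤ (b * l) * (a * u) :=
      mul_le_mul hlu1 ht1 ht0.le (by positivity)
    nlinarith
  set E := 2 * a * b * l * u + lam with hE
  have hE0 : 0 < E := by positivity
  have hone : 1 - vs / (vs + D) = D / (vs + D) := by
    field_simp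
    ring
  have hfrac : D / (vs + D) ≤ E / (vs + E) := by
    rw [div_le_div_iff₀ (by positivity) (by positivity)]
    nlinarith
  have hpow : vs ^ nu / lam ^ nu = (vs / lam) ^ nu := by
    rw [Real.div_rpow hvs.le hlam.le]
  have hassoc : vs + lv * sigma + lu * s + lam = vs + D := by rw [hD]; ring
  rw [hassoc]
  rcases le_or_gt vs lam with hcase | hcase
  · -- vs ≤ lam : ratio ≤ 1 and factor ≤ 1
    have h1 : vs ^ nu / lam ^ nu ≤ 1 := by
      rw [hpow]
      exact Real.rpow_le_one (by positivity) (by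
        rw [div_le_one hlam]; exact hcase) hnu0.le
    have h2 : 1 - vs / (vs + D) ≤ 1 := by
      have : 0 ≤ vs / (vs + D) := by positivity
      linarith
    have h3 : 0 ≤ 1 - vs / (vs + D) := by
      rw [hone]; positivity
    calc (vs ^ nu / lam ^ nu) * (1 - vs / (vs + D)) ≤ 1 * 1 :=
          mul_le_mul h1 h2 h3 zero_le_one
      _ ≤ 2 * a * b := by nlinarith
  · -- lam < vs : ratio > 1, use nu ≤ 1/2
    have hr1 : (1:ℝ) ≤ vs / lam := by
      rw [le_div_iff₀ hlam]; linarith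
    have h1 : vs ^ nu / lam ^ nu ≤ u / l := by
      rw [hpow]
      have := Real.rpow_le_rpow_of_exponent_le hr1 hnu
      calc (vs / lam) ^ nu ≤ (vs / lam) ^ ((1:ℝ)/2) := this
        _ = u / l := by
            rw [Real.rpow_div_two_eq_sqrt _ (by positivity), Real.rpow_one,
              Real.sqrt_div' vs hlam.le]
    have h2 : (1 - vs / (vs + D)) ≤ E / (vs + E) := hone ▸ hfrac
    have h3 : 0 ≤ 1 - vs / (vs + D) := by rw [hone]; positivity
    have hmain : (u / l) * (E / (vs + E)) ≤ 2 * a * b := by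
      have hab : (1:ℝ) ≤ a * b := by nlinarith
      have h4 : lam * u ≤ (a*b)^2 * (lam * u) :=
        le_mul_of_one_le_left (by positivity) (by nlinarith)
      have key : u * E ≤ 2 * a * b * (l * (vs + E)) := by
        rw [hE]
        have e1 : 2*a*b*(l*u^2) = 2*a*b*(l*vs) := by rw [hu2]
        have e2 : l^2*u = lam*u := by rw [hl2]
        nlinarith [e1, e2, h4, mul_pos (mul_pos hl0 hlam) (lt_of_lt_of_le one_pos hab)]
      rw [div_mul_div_comm, div_le_iff₀ (by positivity)]
      exact key
    calc (vs ^ nu / lam ^ nu) * (1 - vs / (vs + D)) ≤ (u / l) * (E / (vs + E)) :=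
          mul_le_mul h1 h2 h3 (by positivity)
      _ ≤ 2 * a * b := hmain
end

section
/- Let 𝒰 and 𝒱 be compact metric spaces and let k : 𝒰×𝒰 → ℝ and g : 𝒱×𝒱 → ℝ be continuous universal kernels (their RKHSs are dense in C(𝒰) and C(𝒱) respectively, in the sup norm). Then the Kronecker product pairwise kernel Γ((u,v),(ū,v̄)) = k(u,ū)·g(v,v̄) is a universal kernel on 𝒰×𝒱, i.e., its RKHS is dense in C(𝒰×𝒱). -/
open scoped BoundedContinuousFunction

/-- A continuous kernel on a compact space is universal if the span of its sections
(the functions `x ↦ k x u`), which is dense in its RKHS, is dense in `C(X, ℝ)` with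
the uniform norm. -/
def IsUniversalKernel {X : Type*} [TopologicalSpace X] [CompactSpace X]
    (k : X → X → ℝ) : Prop :=
  Dense ((Submodule.span ℝ {h : C(X, ℝ) | ∃ u : X, ∀ x : X, h x = k x u} :
    Submodule ℝ C(X, ℝ)) : Set C(X, ℝ))

/-!
The sections of the product kernel are the products `tensorMul a b : (u, v) ↦ a u * b v` of
sections `a` of `k` and `b` of `g`. As `tensorMul` is bilinear and jointly continuous, the closure
of their span contains `tensorMul a b` for all `a ∈ C(U)`, `b ∈ C(V)`. These products are closed
under multiplication and separate the points of `U × V`, so by Stone–Weierstrass their span is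
dense in `C(U × V)`.
-/

open Set Submodule

namespace ContinuousMap

variable {X Y R : Type*} [TopologicalSpace X] [TopologicalSpace Y]
  [CommSemiring R] [TopologicalSpace R] [IsTopologicalSemiring R]

variable (R) in
def tensorMul : C(X, R) →ₗ[R] C(Y, R) →ₗ[R] C(X × Y, R) :=
  LinearMap.mk₂ R (fun a b => a.comp fst * b.comp snd)
    (fun _ _ _ => by ext; simp [add_mul]) (fun _ _ _ => by ext; simp)
    (fun _ _ _ => by ext; simp [mul_add]) (fun _ _ _ => by ext; simp)

@[simp]
lemma tensorMul_apply (a : C(X, R)) (b : C(Y, R)) (p : X × Y) :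
    tensorMul R a b p = a p.1 * b p.2 := rfl

lemma tensorMul_mul_tensorMul (a a' : C(X, R)) (b b' : C(Y, R)) :
    tensorMul R a b * tensorMul R a' b' = tensorMul R (a * a') (b * b') := by
  ext
  simp only [mul_apply, tensorMul_apply]
  ring

section LocallyCompact

variable [LocallyCompactSpace X] [LocallyCompactSpace Y]

lemma continuous_uncurry_tensorMul :
    Continuous (Function.uncurry fun (a : C(X, R)) (b : C(Y, R)) => tensorMul R a b) :=
  ((continuous_precomp fst).comp continuous_fst).mul
    ((continuous_precomp snd).comp continuous_snd)

lemma tensorMul_mem_closure_span_image2 {s : Set C(X, R)} {t : Set C(Y, R)}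
    (hs : Dense (span R s : Set C(X, R))) (ht : Dense (span R t : Set C(Y, R)))
    (a : C(X, R)) (b : C(Y, R)) :
    tensorMul R a b ∈
      closure (span R (image2 (fun a b => tensorMul R a b) s t) : Set C(X × Y, R)) := by
  refine map_mem_closure₂ (f := fun a b => tensorMul R a b) continuous_uncurry_tensorMul
    (hs a) (ht b) fun a ha b hb => ?_
  rw [← map₂_span_span]
  exact apply_mem_map₂ _ ha hb

end LocallyCompact

section CompactHausdorff

variable [CompactSpace X] [T2Space X] [CompactSpace Y] [T2Space Y]

lemma separatesPoints_adjoin_tensorMul :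
    (Algebra.adjoin ℝ
      (image2 (fun (a : C(X, ℝ)) (b : C(Y, ℝ)) => tensorMul ℝ a b) univ univ)).SeparatesPoints := by
  rintro ⟨x, y⟩ ⟨x', y'⟩ hne
  have mem (a : C(X, ℝ)) (b : C(Y, ℝ)) : ⇑(tensorMul ℝ a b) ∈ ((⇑) '' (Algebra.adjoin ℝ
      (image2 (fun (a : C(X, ℝ)) (b : C(Y, ℝ)) => tensorMul ℝ a b) univ univ) :
        Set C(X × Y, ℝ))) :=
    ⟨_, Algebra.subset_adjoin (mem_image2_of_mem (mem_univ a) (mem_univ b)), rfl⟩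
  by_cases hx : x = x'
  · obtain ⟨b, hb, hbyy'⟩ :=
      separatesPoints_continuous_of_t35Space fun hy => hne (Prod.ext hx hy)
    exact ⟨_, mem 1 ⟨b, hb⟩, by simpa using hbyy'⟩
  · obtain ⟨a, ha, haxx'⟩ := separatesPoints_continuous_of_t35Space hx
    exact ⟨_, mem ⟨a, ha⟩ 1, by simpa using haxx'⟩

lemma dense_span_tensorMul :
    Dense (span ℝ (image2 (fun (a : C(X, ℝ)) (b : C(Y, ℝ)) => tensorMul ℝ a b) univ univ) :
      Set C(X × Y, ℝ)) := by
  set S : Set C(X × Y, ℝ) := image2 (fun a b => tensorMul ℝ a b) univ univ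
  have hS : (Submonoid.closure S : Set C(X × Y, ℝ)) ⊆ span ℝ S := by
    intro f hf
    refine subset_span (Submonoid.closure_induction (fun f hf => hf) ?_ ?_ hf)
    · exact ⟨1, trivial, 1, trivial, by ext; simp⟩
    · rintro _ _ - - ⟨a, -, b, -, rfl⟩ ⟨a', -, b', -, rfl⟩
      exact ⟨a * a', trivial, b * b', trivial, (tensorMul_mul_tensorMul a a' b b').symm⟩
  have hA := subalgebra_topologicalClosure_eq_top_of_separatesPoints _
    separatesPoints_adjoin_tensorMul (X := X × Y)
  rw [dense_iff_closure_eq, ← Algebra.adjoin_eq_span_of_subset (R := ℝ) hS,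
    Subalgebra.coe_toSubmodule, ← Subalgebra.topologicalClosure_coe, hA, Algebra.coe_top]

lemma dense_span_image2_tensorMul {s : Set C(X, ℝ)} {t : Set C(Y, ℝ)}
    (hs : Dense (span ℝ s : Set C(X, ℝ))) (ht : Dense (span ℝ t : Set C(Y, ℝ))) :
    Dense (span ℝ (image2 (fun a b => tensorMul ℝ a b) s t) : Set C(X × Y, ℝ)) := by
  have hle : span ℝ (image2 (fun (a : C(X, ℝ)) (b : C(Y, ℝ)) => tensorMul ℝ a b) univ univ) ≤
      (span ℝ (image2 (fun a b => tensorMul ℝ a b) s t)).topologicalClosure := by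
    rw [span_le]
    rintro _ ⟨a, -, b, -, rfl⟩
    exact tensorMul_mem_closure_span_image2 hs ht a b
  exact Dense.of_closure (dense_span_tensorMul.mono hle)

end CompactHausdorff

end ContinuousMap

theorem stmt_15_general {U V : Type*} [MetricSpace U] [CompactSpace U]
    [MetricSpace V] [CompactSpace V]
    (k : U → U → ℝ) (g : V → V → ℝ)
    (huk : IsUniversalKernel k) (hug : IsUniversalKernel g) :
    IsUniversalKernel (fun p q : U × V => k p.1 q.1 * g p.2 q.2) := by
  refine (ContinuousMap.dense_span_image2_tensorMul huk hug).mono (span_mono ?_)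
  rintro _ ⟨a, ⟨u, ha⟩, b, ⟨v, hb⟩, rfl⟩
  exact ⟨(u, v), fun p => by simp [ha, hb]⟩

/-- The Kronecker product pairwise kernel of two continuous universal kernels on
compact metric spaces is a universal kernel on the product space. -/
theorem stmt_15 {U V : Type*} [MetricSpace U] [CompactSpace U]
    [MetricSpace V] [CompactSpace V]
    (k : U → U → ℝ) (g : V → V → ℝ)
    (hk : Continuous fun p : U × U => k p.1 p.2)
    (hg : Continuous fun p : V × V => g p.1 p.2)
    (huk : IsUniversalKernel k) (hug : IsUniversalKernel g) :
    IsUniversalKernel (fun p q : U × V => k p.1 q.1 * g p.2 q.2) :=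
  stmt_15_general k g huk hug
end
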